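/- With the Table parameter values, β = 40 and delay d_I = 0.1, the characteristic function Δ restricted to the real line has at least five distinct negative real zeros: there exist real numbers λ1 < λ2 < λ3 < λ4 < λ5 < 0 with Δ(λ_j) = 0 for j = 1,…,5 (approximately λ1 ≈ −23.4817, λ2 ≈ −18.1066, λ3 ≈ −1.0243, λ4 ≈ −0.3209, λ5 ≈ −0.0115). -/
import Mathlib


noncomputable section TBNumeric

/-- Table parameter values. -/
def μ : ℝ := 1 / 70
def β : ℝ := 40
def δ : ℝ := 12
def φ : ℝ := 0.05
def ω : ℝ := 0.0002
def ωR : ℝ := 0.00002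
def τ0 : ℝ := 2
def τ1 : ℝ := 2
def τ2 : ℝ := 1

def c1 : ℝ := δ + τ1 + μ
def c2 : ℝ := ω + τ2 + μ
def c3 : ℝ := ωR + τ0 + μ
def c4 : ℝ := τ0 + ωR
def c5 : ℝ := τ2 + ω
def c6 : ℝ := δ + τ1

def NN : ℝ := β * (ωR * (ω + τ2 + μ) * τ1
  + δ * ((ωR + μ) * (φ * μ + ω) + (ωR + φ * μ) * τ2))
def DD : ℝ := μ * (τ0 + μ + ωR) * (ω + τ2 + μ) * (δ + τ1 + μ)

def a0 : ℝ := DD - NN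
def a1 : ℝ := (2 / μ) * DD + μ ^ 2 * (c1 + c2 + c4) - c4 * c5 * c6
  - β * (τ1 * ωR + ω * δ + δ * φ * (ωR + τ2 + 2 * μ))
def a2 : ℝ := c4 * c5 + 3 * μ * (c1 + c2 + c4) + c6 * (c4 + c5) - β * φ * δ
def a3 : ℝ := c1 + c2 + c3 + μ

/-- The characteristic function `Δ` with delay `dI`, restricted to the
real line. -/
def Δ (dI lam : ℝ) : ℝ :=
  lam ^ 4 + a3 * lam ^ 3 + a2 * lam ^ 2 + a1 * lam + a0
    + τ0 * (lam + μ) * (lam + c1) * (lam + c2) * (Real.exp (-(lam * dI)) - 1)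

lemma Δ_continuous : Continuous (Δ 0.1) := by
  unfold Δ; fun_prop

lemma ivt_up {a b : ℝ} (hab : a < b) (ha : Δ 0.1 a < 0) (hb : 0 < Δ 0.1 b) :
    ∃ x, a < x ∧ x < b ∧ Δ 0.1 x = 0 := by
  obtain ⟨x, hx, hfx⟩ := intermediate_value_Ioo hab.le Δ_continuous.continuousOn
    (show (0:ℝ) ∈ Set.Ioo (Δ 0.1 a) (Δ 0.1 b) from ⟨ha, hb⟩)
  exact ⟨x, hx.1, hx.2, hfx⟩

lemma ivt_down {a b : ℝ} (hab : a < b) (ha : 0 < Δ 0.1 a) (hb : Δ 0.1 b < 0) :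
    ∃ x, a < x ∧ x < b ∧ Δ 0.1 x = 0 := by
  obtain ⟨x, hx, hfx⟩ := intermediate_value_Ioo' hab.le Δ_continuous.continuousOn
    (show (0:ℝ) ∈ Set.Ioo (Δ 0.1 b) (Δ 0.1 a) from ⟨hb, ha⟩)
  exact ⟨x, hx.1, hx.2, hfx⟩

lemma exp3_gt : (14.3:ℝ) < Real.exp 3 := by
  have h := Real.exp_one_gt_d9
  have h3 : Real.exp 3 = Real.exp 1 ^ 3 := by rw [← Real.exp_nat_mul]; norm_num
  have h4 : (2.7:ℝ) ^ 3 ≤ Real.exp 1 ^ 3 := by gcongr <;> linarith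
  rw [h3]; nlinarith

lemma exp2_lt : Real.exp 2 < 7.9 := by
  have h := Real.exp_one_lt_d9
  have h2 : Real.exp 2 = Real.exp 1 ^ 2 := by rw [← Real.exp_nat_mul]; norm_num
  have h3 : Real.exp 1 ^ 2 ≤ (2.7182818286:ℝ) ^ 2 := by gcongr <;> linarith
  rw [h2]; nlinarith

lemma exp005_lt : Real.exp 0.05 < 1.06 := by
  have h := Real.add_one_le_exp (-0.05)
  rw [Real.exp_neg, inv_eq_one_div] at h
  have hp := Real.exp_pos (0.05:ℝ)
  have h2 := (le_div_iff₀ hp).mp (by linarith : (0.95:ℝ) ≤ 1 / Real.exp 0.05)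
  linarith

lemma h30 : Δ 0.1 (-30) < 0 := by
  have he := exp3_gt
  unfold Δ a0 a1 a2 a3 NN DD c1 c2 c3 c4 c5 c6 μ β δ φ ω ωR τ0 τ1 τ2
  norm_num
  nlinarith [he]

lemma h20 : 0 < Δ 0.1 (-20) := by
  have he := exp2_lt
  have hp := Real.exp_pos (2:ℝ)
  unfold Δ a0 a1 a2 a3 NN DD c1 c2 c3 c4 c5 c6 μ β δ φ ω ωR τ0 τ1 τ2
  norm_num
  nlinarith [he, hp]

lemma h10 : Δ 0.1 (-10) < 0 := by
  have he := Real.exp_one_lt_d9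
  have hp := Real.exp_pos (1:ℝ)
  unfold Δ a0 a1 a2 a3 NN DD c1 c2 c3 c4 c5 c6 μ β δ φ ω ωR τ0 τ1 τ2
  norm_num
  nlinarith [he, hp]

lemma hhalf : 0 < Δ 0.1 (-(1/2)) := by
  have he := exp005_lt
  have hp := Real.exp_pos (0.05:ℝ)
  unfold Δ a0 a1 a2 a3 NN DD c1 c2 c3 c4 c5 c6 μ β δ φ ω ωR τ0 τ1 τ2
  norm_num
  nlinarith [he, hp]

lemma htenth : Δ 0.1 (-(1/10)) < 0 := by
  have he := Real.add_one_le_exp (0.01:ℝ)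
  unfold Δ a0 a1 a2 a3 NN DD c1 c2 c3 c4 c5 c6 μ β δ φ ω ωR τ0 τ1 τ2
  norm_num
  nlinarith [he]

lemma hlast : 0 < Δ 0.1 (-(1/1000)) := by
  have he := Real.add_one_le_exp (0.0001:ℝ)
  unfold Δ a0 a1 a2 a3 NN DD c1 c2 c3 c4 c5 c6 μ β δ φ ω ωR τ0 τ1 τ2
  norm_num
  nlinarith [he]

/-- With the Table parameter values, `β = 40` and delay `dI = 0.1`, the
characteristic function restricted to the real line has at least five distinct
negative real zeros. -/
theorem tb_dfe_char_five_negative_real_roots :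
    ∃ lam1 lam2 lam3 lam4 lam5 : ℝ,
      lam1 < lam2 ∧ lam2 < lam3 ∧ lam3 < lam4 ∧ lam4 < lam5 ∧ lam5 < 0 ∧
      Δ 0.1 lam1 = 0 ∧ Δ 0.1 lam2 = 0 ∧ Δ 0.1 lam3 = 0 ∧
      Δ 0.1 lam4 = 0 ∧ Δ 0.1 lam5 = 0 := by
  obtain ⟨x1, hx1a, hx1b, hx1⟩ := ivt_up (by norm_num : (-30:ℝ) < -20) h30 h20
  obtain ⟨x2, hx2a, hx2b, hx2⟩ := ivt_down (by norm_num : (-20:ℝ) < -10) h20 h10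
  obtain ⟨x3, hx3a, hx3b, hx3⟩ := ivt_up (by norm_num : (-10:ℝ) < -(1/2)) h10 hhalf
  obtain ⟨x4, hx4a, hx4b, hx4⟩ := ivt_down (by norm_num : (-(1/2):ℝ) < -(1/10)) hhalf htenth
  obtain ⟨x5, hx5a, hx5b, hx5⟩ := ivt_up (by norm_num : (-(1/10):ℝ) < -(1/1000)) htenth hlast
  exact ⟨x1, x2, x3, x4, x5, by linarith, by linarith, by linarith, by linarith,
    by linarith, hx1, hx2, hx3, hx4, hx5⟩

end TBNumeric
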